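/- On the central extension ℝ ×_ω 𝔛(S¹) (Virasoro algebra) with bracket [(X,a),(Y,b)] = (X'Y − XY', ω(X,Y)) where ω(X,Y) = ∫ X'Y'' dx, and inner product ⟨(X,a),(Y,b)⟩ = ∫ XY dx + ab, the transposed adjoint exists and is given by ad(X,a)ᵀ(Z,c) = (2X'Z + XZ' + cX''', 0); consequently the Euler (geodesic) equation (u,a)_t = −ad(u,a)ᵀ(u,a) is a_t = 0 together with the Korteweg–de Vries equation u_t + 3u_x u + a u_{xxx} = 0. -/

import Mathlib

open scoped ContDiff

lemma periodic_deriv_aux (f : ℝ → ℝ) (c : ℝ) (pf : Function.Periodic f c) :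
    Function.Periodic (deriv f) c := by
  intro x
  rw [← deriv_comp_add_const]
  congr 1
  funext y
  exact pf y

lemma contDiff_inf_deriv {f : ℝ → ℝ} (hf : ContDiff ℝ ∞ f) : ContDiff ℝ ∞ (deriv f) :=
  (contDiff_infty_iff_deriv.mp hf).2

/-- The Gelfand–Fuchs cocycle `ω(X,Y) = ∫ X' Y'' dx` over one period. -/
noncomputable def gfCocycle (X Y : ℝ → ℝ) : ℝ :=
  ∫ x in (0:ℝ)..(2 * Real.pi), deriv X x * iteratedDeriv 2 Y x

lemma ibp_periodic (f g : ℝ → ℝ) (hf : ContDiff ℝ ∞ f) (hg : ContDiff ℝ ∞ g)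
    (pf : Function.Periodic f (2 * Real.pi)) (pg : Function.Periodic g (2 * Real.pi)) :
    ∫ x in (0:ℝ)..(2 * Real.pi), deriv f x * g x
      = -∫ x in (0:ℝ)..(2 * Real.pi), f x * deriv g x := by
  have hf' : ContDiff ℝ ∞ (deriv f) := contDiff_inf_deriv hf
  have hg' : ContDiff ℝ ∞ (deriv g) := contDiff_inf_deriv hg
  have c1 : Continuous fun x => deriv f x * g x := hf'.continuous.mul hg.continuous
  have c2 : Continuous fun x => f x * deriv g x := hf.continuous.mul hg'.continuous
  have key : ∫ x in (0:ℝ)..(2 * Real.pi), (deriv f x * g x + f x * deriv g x) = 0 := by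
    have hd : ∀ x ∈ Set.uIcc (0:ℝ) (2 * Real.pi),
        HasDerivAt (fun x => f x * g x) (deriv f x * g x + f x * deriv g x) x := by
      intro x _
      exact ((hf.differentiable (by norm_num) x).hasDerivAt).mul
        ((hg.differentiable (by norm_num) x).hasDerivAt)
    rw [intervalIntegral.integral_eq_sub_of_hasDerivAt hd
      ((c1.add c2).intervalIntegrable _ _)]
    have hpf : f (2 * Real.pi) = f 0 := by simpa using pf 0
    have hpg : g (2 * Real.pi) = g 0 := by simpa using pg 0
    rw [hpf, hpg]; ring
  rw [intervalIntegral.integral_add (c1.intervalIntegrable _ _) (c2.intervalIntegrable _ _)]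
    at key
  linarith

/-- On the Virasoro algebra `ℝ ×_ω 𝔛(S¹)` with bracket
`[(X,a),(Y,b)] = (X'Y − XY', ω(X,Y))` and inner product `⟨(X,a),(Y,b)⟩ = ∫XY + ab`,
the transposed adjoint is `ad(X,a)ᵀ(Z,c) = (2X'Z + XZ' + cX''', 0)`; consequently the
Euler equation `(u,a)_t = −ad(u,a)ᵀ(u,a)` is `a_t = 0` together with the KdV equation
`u_t + 3u_x u + a u_{xxx} = 0`. -/
theorem virasoro_ad_transpose_and_kdv :
    (∀ X Y Z : ℝ → ℝ, ContDiff ℝ (⊤ : ℕ∞) X → ContDiff ℝ (⊤ : ℕ∞) Y → ContDiff ℝ (⊤ : ℕ∞) Z →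
      Function.Periodic X (2 * Real.pi) → Function.Periodic Y (2 * Real.pi) →
      Function.Periodic Z (2 * Real.pi) → ∀ b c : ℝ,
      (∫ x in (0:ℝ)..(2 * Real.pi), (deriv X x * Y x - X x * deriv Y x) * Z x)
          + gfCocycle X Y * c
        = (∫ x in (0:ℝ)..(2 * Real.pi),
            Y x * (2 * deriv X x * Z x + X x * deriv Z x + c * iteratedDeriv 3 X x))
          + b * 0) ∧
    (∀ (u : ℝ → ℝ → ℝ) (a : ℝ),
      (∀ t x, deriv (fun s => u s x) t
          = -(2 * deriv (u t) x * u t x + u t x * deriv (u t) x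
              + a * iteratedDeriv 3 (u t) x)) ↔
      (∀ t x, deriv (fun s => u s x) t + 3 * deriv (u t) x * u t x
          + a * iteratedDeriv 3 (u t) x = 0)) := by
  constructor
  · intro X Y Z hX hY hZ pX pY pZ b c
    replace hX : ContDiff ℝ ∞ X := hX.of_le (by simp)
    replace hY : ContDiff ℝ ∞ Y := hY.of_le (by simp)
    replace hZ : ContDiff ℝ ∞ Z := hZ.of_le (by simp)
    have hX' : ContDiff ℝ ∞ (deriv X) := contDiff_inf_deriv hX
    have hX'' : ContDiff ℝ ∞ (deriv (deriv X)) := contDiff_inf_deriv hX'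
    have hY' : ContDiff ℝ ∞ (deriv Y) := contDiff_inf_deriv hY
    have hZ' : ContDiff ℝ ∞ (deriv Z) := contDiff_inf_deriv hZ
    have pX' : Function.Periodic (deriv X) (2 * Real.pi) := periodic_deriv_aux _ _ pX
    have pX'' : Function.Periodic (deriv (deriv X)) (2 * Real.pi) := periodic_deriv_aux _ _ pX'
    have pY' : Function.Periodic (deriv Y) (2 * Real.pi) := periodic_deriv_aux _ _ pY
    -- first IBP: ∫ Y' (X Z) = - ∫ Y (X Z)'
    have h1 : ∫ x in (0:ℝ)..(2 * Real.pi), deriv Y x * (X x * Z x)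
        = -∫ x in (0:ℝ)..(2 * Real.pi), Y x * deriv (fun x => X x * Z x) x :=
      ibp_periodic Y (fun x => X x * Z x) hY (hX.mul hZ) pY (pX.mul pZ)
    have hXZd : ∀ x, deriv (fun x => X x * Z x) x = deriv X x * Z x + X x * deriv Z x := by
      intro x
      exact ((hX.differentiable (by norm_num) x).hasDerivAt.mul
        (hZ.differentiable (by norm_num) x).hasDerivAt).deriv
    -- cocycle IBP twice
    have h2 : ∫ x in (0:ℝ)..(2 * Real.pi), deriv X x * iteratedDeriv 2 Y x
        = ∫ x in (0:ℝ)..(2 * Real.pi), Y x * iteratedDeriv 3 X x := by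
      have e2 : iteratedDeriv 2 Y = deriv (deriv Y) := by
        simp [iteratedDeriv_succ, iteratedDeriv_one]
      have e3 : iteratedDeriv 3 X = deriv (deriv (deriv X)) := by
        simp [iteratedDeriv_succ, iteratedDeriv_one]
      rw [e2, e3]
      have b1 : ∫ x in (0:ℝ)..(2 * Real.pi), deriv (deriv Y) x * deriv X x
          = -∫ x in (0:ℝ)..(2 * Real.pi), deriv Y x * deriv (deriv X) x :=
        ibp_periodic (deriv Y) (deriv X) hY' hX' pY' pX'
      have b2 : ∫ x in (0:ℝ)..(2 * Real.pi), deriv Y x * deriv (deriv X) x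
          = -∫ x in (0:ℝ)..(2 * Real.pi), Y x * deriv (deriv (deriv X)) x :=
        ibp_periodic Y (deriv (deriv X)) hY hX'' pY pX''
      calc ∫ x in (0:ℝ)..(2 * Real.pi), deriv X x * deriv (deriv Y) x
          = ∫ x in (0:ℝ)..(2 * Real.pi), deriv (deriv Y) x * deriv X x := by
            simp_rw [mul_comm]
        _ = ∫ x in (0:ℝ)..(2 * Real.pi), Y x * deriv (deriv (deriv X)) x := by
            rw [b1, b2, neg_neg]
    have cX := hX.continuous
    have cY := hY.continuous
    have cZ := hZ.continuous
    have cX' := hX'.continuous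
    have cY' := hY'.continuous
    have cZ' := hZ'.continuous
    have cX3 : Continuous (fun x => iteratedDeriv 3 X x) := by
      have e3 : iteratedDeriv 3 X = deriv (deriv (deriv X)) := by
        simp [iteratedDeriv_succ, iteratedDeriv_one]
      rw [e3]
      exact (contDiff_inf_deriv hX'').continuous
    simp only [hXZd] at h1
    have k : ∫ x in (0:ℝ)..(2 * Real.pi),
        (deriv Y x * (X x * Z x) + Y x * (deriv X x * Z x + X x * deriv Z x)) = 0 := by
      rw [intervalIntegral.integral_add (f := fun x => deriv Y x * (X x * Z x))
        (g := fun x => Y x * (deriv X x * Z x + X x * deriv Z x))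
        ((cY'.mul (cX.mul cZ)).intervalIntegrable _ _)
        ((cY.mul ((cX'.mul cZ).add (cX.mul cZ'))).intervalIntegrable _ _)]
      linarith
    have main : ∫ x in (0:ℝ)..(2 * Real.pi), (deriv X x * Y x - X x * deriv Y x) * Z x
        = ∫ x in (0:ℝ)..(2 * Real.pi), Y x * (2 * deriv X x * Z x + X x * deriv Z x) := by
      have e : Set.EqOn (fun x => (deriv X x * Y x - X x * deriv Y x) * Z x)
          (fun x => Y x * (2 * deriv X x * Z x + X x * deriv Z x)
            - (deriv Y x * (X x * Z x) + Y x * (deriv X x * Z x + X x * deriv Z x)))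
          (Set.uIcc (0:ℝ) (2 * Real.pi)) := fun x _ => by ring
      rw [intervalIntegral.integral_congr e,
        intervalIntegral.integral_sub (f := fun x => Y x * (2 * deriv X x * Z x + X x * deriv Z x))
          (g := fun x => deriv Y x * (X x * Z x) + Y x * (deriv X x * Z x + X x * deriv Z x))
          ((cY.mul (((continuous_const.mul cX').mul cZ).add (cX.mul cZ'))).intervalIntegrable _ _)
          (((cY'.mul (cX.mul cZ)).add
            (cY.mul ((cX'.mul cZ).add (cX.mul cZ')))).intervalIntegrable _ _),
        k, sub_zero]
    have split : ∫ x in (0:ℝ)..(2 * Real.pi),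
        Y x * (2 * deriv X x * Z x + X x * deriv Z x + c * iteratedDeriv 3 X x)
        = (∫ x in (0:ℝ)..(2 * Real.pi), Y x * (2 * deriv X x * Z x + X x * deriv Z x))
          + c * ∫ x in (0:ℝ)..(2 * Real.pi), Y x * iteratedDeriv 3 X x := by
      have e : Set.EqOn
          (fun x => Y x * (2 * deriv X x * Z x + X x * deriv Z x + c * iteratedDeriv 3 X x))
          (fun x => Y x * (2 * deriv X x * Z x + X x * deriv Z x)
            + c * (Y x * iteratedDeriv 3 X x))
          (Set.uIcc (0:ℝ) (2 * Real.pi)) := fun x _ => by ring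
      rw [intervalIntegral.integral_congr e,
        intervalIntegral.integral_add (f := fun x => Y x * (2 * deriv X x * Z x + X x * deriv Z x))
          (g := fun x => c * (Y x * iteratedDeriv 3 X x))
          ((cY.mul (((continuous_const.mul cX').mul cZ).add (cX.mul cZ'))).intervalIntegrable _ _)
          ((continuous_const.mul (cY.mul cX3)).intervalIntegrable _ _),
        intervalIntegral.integral_const_mul]
    rw [gfCocycle, h2, main, split]
    ring
  · intro u a
    constructor
    · intro h t x; have := h t x; linarith
    · intro h t x; have := h t x; linarith
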